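/- Let n ∈ ℕ, m_1, …, m_n ≥ 0 with ∑ m_i = 1, x_1, …, x_n ∈ Ω, and set ρ := ∑_{i=1}^n m_i δ_{x_i}. Then for every κ ∈ (0,∞), J_{ρ,κ} admits a minimizer over M₊(Ω) of the form ν = ∑_{i=1}^k m̃_i δ_{x̃_i} for some positive integer k ≤ n, nonnegative masses m̃_1, …, m̃_k and points x̃_1, …, x̃_k ∈ Ω. -/

import Mathlib

open scoped Classical
open MeasureTheory ENNReal Filter Topology Real
open scoped NNReal

noncomputable section

/-- The entropy function `φ` with `φ(s) = s log s - s + 1` for `s > 0`, `φ(0) = 1`. -/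
def phiEnt (s : ℝ≥0∞) : ℝ≥0∞ :=
  if s = 0 then 1 else if s = ⊤ then ⊤
  else ENNReal.ofReal (s.toReal * Real.log s.toReal - s.toReal + 1)

/-- Kullback–Leibler divergence of `σ` with respect to `μ`. -/
def KLdiv {X : Type*} [MeasurableSpace X] (σ μ : Measure X) : ℝ≥0∞ :=
  if σ ≪ μ then ∫⁻ x, phiEnt (σ.rnDeriv μ x) ∂μ else ⊤

/-- The cost `ĉ_κ(x,y) = -2 log cos(d(x,y)/κ)` for `d(x,y) ≤ κπ/2`, `∞` otherwise. -/
def hkCost {X : Type*} [PseudoMetricSpace X] (κ : ℝ) (x y : X) : ℝ≥0∞ :=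
  if dist x y < κ * π / 2 then ENNReal.ofReal (-2 * Real.log (Real.cos (dist x y / κ))) else ⊤

/-- Squared Hellinger–Kantorovich distance with length scale `κ`. -/
def HK2 {X : Type*} [MeasurableSpace X] [PseudoMetricSpace X] (κ : ℝ) (μ ν : Measure X) : ℝ≥0∞ :=
  ⨅ (γ : Measure (X × X)) (_ : IsFiniteMeasure γ),
    (∫⁻ p, hkCost κ p.1 p.2 ∂γ) + KLdiv (γ.map Prod.fst) μ + KLdiv (γ.map Prod.snd) ν

abbrev Ed (d : ℕ) : Type := EuclideanSpace ℝ (Fin d)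

/-- Truncated cosine `Cos(s) = cos(min(|s|, π/2))`. -/
def tcos (s : ℝ) : ℝ := Real.cos (min |s| (π / 2))

/-- Squared Hellinger distance. -/
def Hell2 {X : Type*} [MeasurableSpace X] (μ ν : Measure X) : ℝ≥0∞ :=
  ∫⁻ x, ENNReal.ofReal ((Real.sqrt ((μ.rnDeriv (μ + ν)) x).toReal
      - Real.sqrt ((ν.rnDeriv (μ + ν)) x).toReal) ^ 2) ∂(μ + ν)

/-- Squared Wasserstein-2 distance (value `∞` when no coupling exists). -/
def W2 {X : Type*} [MeasurableSpace X] [PseudoMetricSpace X] (μ ν : Measure X) : ℝ≥0∞ :=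
  ⨅ (γ : Measure (X × X)) (_ : γ.map Prod.fst = μ) (_ : γ.map Prod.snd = ν),
    ∫⁻ p, ENNReal.ofReal (dist p.1 p.2 ^ 2) ∂γ

/-- Borel σ-algebra on the space of finite measures with the weak* topology. -/
instance (X : Type*) [TopologicalSpace X] [MeasurableSpace X] [OpensMeasurableSpace X] :
    MeasurableSpace (FiniteMeasure X) := borel _

instance (X : Type*) [TopologicalSpace X] [MeasurableSpace X] [OpensMeasurableSpace X] :
    BorelSpace (FiniteMeasure X) := ⟨rfl⟩

/-- The set `𝔠` of nonnegative measures of total mass at most `M`. -/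
def cSet (X : Type*) [TopologicalSpace X] [MeasurableSpace X] [OpensMeasurableSpace X]
    (M : ℝ≥0) : Set (FiniteMeasure X) := {μ | μ.mass ≤ M}

/-- The barycenter functional `J_{Λ,κ}`. -/
def JCont {X : Type*} [MeasurableSpace X] [PseudoMetricSpace X] [OpensMeasurableSpace X]
    {M : ℝ≥0} (Λ : Measure (cSet X M)) (κ : ℝ) (ν : Measure X) : ℝ≥0∞ :=
  ∫⁻ μ : cSet X M, HK2 κ ((μ : FiniteMeasure X) : Measure X) ν ∂Λ

/-- Barycenter functional for the limit scales `κ∞ = 0` (Hellinger) and `κ∞ = ∞` (Wasserstein). -/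
def JContGen {X : Type*} [MeasurableSpace X] [PseudoMetricSpace X] [OpensMeasurableSpace X]
    {M : ℝ≥0} (Λ : Measure (cSet X M)) (κinf : ℝ≥0∞) (ν : Measure X) : ℝ≥0∞ :=
  if κinf = 0 then ∫⁻ μ : cSet X M, Hell2 ((μ : FiniteMeasure X) : Measure X) ν ∂Λ
  else if κinf = ⊤ then ∫⁻ μ : cSet X M, W2 ((μ : FiniteMeasure X) : Measure X) ν ∂Λ
  else ∫⁻ μ : cSet X M, HK2 κinf.toReal ((μ : FiniteMeasure X) : Measure X) ν ∂Λ

/-- The barycenter functional `J_{ρ,κ}` for Dirac input measures distributed as `ρ`. -/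
def JDirac {X : Type*} [MeasurableSpace X] [PseudoMetricSpace X]
    (ρ : Measure X) (κ : ℝ) (ν : Measure X) : ℝ≥0∞ :=
  ∫⁻ x, HK2 κ (Measure.dirac x) ν ∂ρ

/-- The dual constraint function `F_{ρ,κ}(ψ)`. -/
def Fcon {X : Type*} [MeasurableSpace X] [PseudoMetricSpace X]
    (ρ : Measure X) (κ : ℝ) (ψ : X → ℝ) (y : X) : ℝ :=
  ∫ x, tcos (dist x y / κ) ^ 2 / (1 - ψ x) ∂ρ

/-- Admissibility for the dual problem `(D_{ρ,κ})`. -/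
def DualAdm {X : Type*} [MeasurableSpace X] [PseudoMetricSpace X]
    (ρ : Measure X) (κ : ℝ) (ψ : X → ℝ) : Prop :=
  Continuous ψ ∧ (∀ x, ψ x < 1) ∧ ∀ y, Fcon ρ κ ψ y ≤ 1

/-- Optimality for the dual problem `(D_{ρ,κ})`. -/
def DualOpt {X : Type*} [MeasurableSpace X] [PseudoMetricSpace X]
    (ρ : Measure X) (κ : ℝ) (ψ : X → ℝ) : Prop :=
  DualAdm ρ κ ψ ∧ ∀ ψ' : X → ℝ, DualAdm ρ κ ψ' → ∫ x, ψ' x ∂ρ ≤ ∫ x, ψ x ∂ρ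

/-- `ν` minimizes `J_{ρ,κ}` over the nonnegative finite measures. -/
def PrimalMin {X : Type*} [MeasurableSpace X] [PseudoMetricSpace X]
    (ρ : Measure X) (κ : ℝ) (ν : Measure X) : Prop :=
  IsFiniteMeasure ν ∧ ∀ ν' : Measure X, IsFiniteMeasure ν' → JDirac ρ κ ν ≤ JDirac ρ κ ν'

/-- Support of a measure. -/
def msupport {X : Type*} [TopologicalSpace X] [MeasurableSpace X] (μ : Measure X) : Set X :=
  {x | ∀ U ∈ nhds x, 0 < μ U}

/-- A measure is discrete if it is a countable sum of weighted Dirac measures. -/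
def IsDiscreteMeas {X : Type*} [MeasurableSpace X] (μ : Measure X) : Prop :=
  ∃ (x : ℕ → X) (c : ℕ → ℝ≥0∞), μ = Measure.sum fun n => c n • Measure.dirac (x n)

/-- The dual constraint set `Q_κ`. -/
def QSet (X : Type*) [PseudoMetricSpace X] (κ : ℝ) : Set ((X → ℝ) × (X → ℝ)) :=
  {p | Continuous p.1 ∧ Continuous p.2 ∧ (∀ x, p.1 x ≤ 1) ∧ (∀ y, p.2 y ≤ 1) ∧
    ∀ x y, tcos (dist x y / κ) ^ 2 ≤ (1 - p.1 x) * (1 - p.2 y)}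

/-!
A plan for `HK_κ²(δ_x, ν)` is `δ_x ⊗ r ν` for some density `r`. The convex conjugate of
`φ(s) = s log s - s + 1` is `exp - 1`. Apply the Fenchel–Young inequality `φ(s) ≥ β s + 1 - exp β`
to `r` with `β = log (Cos²(|x - ·| / κ) / u)`, and to its total mass with `β = log u`. Integrating,
the cost is at least `1 + ν(Ω) - a / u - u`, where `a = ∫ Cos²(|x - y| / κ) dν(y)`. Take `u = √a`;
the density `r = Cos²(|x - ·| / κ) / √a` attains the bound, so
`HK_κ²(δ_x, ν) = 1 + ν(Ω) - 2 √a`. Hence `J_{ρ,κ}(ν) = 1 + ν(Ω) - 2 ∑ mᵢ √(aᵢ(ν))` depends on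
`ν` only through its mass and the `n` moments `aᵢ(ν) = ∫ Cos²(|xᵢ - y| / κ) dν(y)`.

By compactness, this function has a minimizer among the measures with `n + 1` atoms and bounded
masses. The `n + 1` moment vectors of the atoms lie in `ℝⁿ`, so they are linearly dependent,
and one atom can be removed without increasing the mass or changing the moments. The freed slot
lets us add a small atom at any point, and all the masses can also be rescaled. The resulting
first-order conditions are the dual certificate `∑ mᵢ Cos²(|xᵢ - y| / κ) / √aᵢ ≤ 1` for every `y`,
and `ν(Ω) = ∑ mᵢ √aᵢ`. Integrating the certificate against any finite `ν` and applying AM–GM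
shows that the `n`-atom measure minimizes `J_{ρ,κ}` over all finite measures.
-/

open InformationTheory Set

lemma mul_add_one_le_klFun_add_exp {s : ℝ} (hs : 0 ≤ s) (β : ℝ) : β * s + 1 ≤ klFun s + exp β := by
  rcases hs.eq_or_lt with rfl | hs
  · simp only [mul_zero, zero_add, klFun_zero]
    linarith [exp_pos β]
  · have h := add_one_le_exp (β - log s)
    rw [exp_sub, exp_log hs, le_div_iff₀ hs] at h
    rw [klFun]
    nlinarith

lemma phiEnt_of_ne_top {r : ℝ≥0∞} (hr : r ≠ ⊤) : phiEnt r = ENNReal.ofReal (klFun r.toReal) := by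
  rcases eq_or_ne r 0 with rfl | h0
  · simp [phiEnt, klFun_zero]
  · rw [phiEnt, if_neg h0, if_neg hr, klFun]
    ring_nf

lemma phiEnt_top : phiEnt ⊤ = ⊤ := by simp [phiEnt]

lemma one_add_le_phiEnt_add {s : ℝ≥0∞} (hs : s ≠ ⊤) {u p q : ℝ} (hu : 0 < u) (hp : 0 ≤ p)
    (hq : 0 ≤ q) (hpq : q - p = log u) :
    1 + ENNReal.ofReal q * s ≤ phiEnt s + ENNReal.ofReal u + ENNReal.ofReal p * s := by
  obtain ⟨σ, hσ, rfl⟩ : ∃ σ, 0 ≤ σ ∧ s = ENNReal.ofReal σ :=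
    ⟨s.toReal, toReal_nonneg, (ofReal_toReal hs).symm⟩
  have key := mul_add_one_le_klFun_add_exp hσ (log u)
  rw [exp_log hu] at key
  rw [phiEnt_of_ne_top ofReal_ne_top, toReal_ofReal hσ, ← ofReal_mul hp, ← ofReal_mul hq]
  calc 1 + ENNReal.ofReal (q * σ) = ENNReal.ofReal (1 + q * σ) := by
        rw [ofReal_add zero_le_one (by positivity), ofReal_one]
    _ ≤ ENNReal.ofReal (klFun σ + u + p * σ) := ofReal_le_ofReal (by nlinarith)
    _ ≤ _ := ofReal_add_le.trans <| add_le_add ofReal_add_le le_rfl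

lemma mul_log_sub_mul_add_one_nonneg {t C : ℝ} (ht : 0 ≤ t) (hC0 : 0 ≤ C) (hC1 : C ≤ 1) :
    0 ≤ (t * log t - t) * C + 1 := by
  have h := klFun_nonneg ht
  rw [klFun] at h
  nlinarith [mul_nonneg hC0 (show 0 ≤ t * log t - t + 1 by linarith)]

lemma le_add_ofReal_two_mul_sqrt {A B : ℝ≥0∞} {a : ℝ} (ha : 0 ≤ a)
    (h : ∀ u : ℝ, 0 < u → A ≤ B + ENNReal.ofReal (a / u + u)) :
    A ≤ B + ENNReal.ofReal (2 * √a) := by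
  rcases ha.eq_or_lt with rfl | ha
  · simp only [sqrt_zero, mul_zero, ofReal_zero, add_zero]
    refine ENNReal.le_of_forall_pos_le_add fun ε hε _ => ?_
    simpa using h ε hε
  · simpa [Real.div_sqrt, two_mul] using h (√a) (sqrt_pos.mpr ha)

section Kernel

variable {X : Type*} [PseudoMetricSpace X]

def hkKernel (κ : ℝ) (x y : X) : ℝ := tcos (dist x y / κ) ^ 2

lemma hkKernel_nonneg (κ : ℝ) (x y : X) : 0 ≤ hkKernel κ x y := sq_nonneg _

lemma hkKernel_le_one (κ : ℝ) (x y : X) : hkKernel κ x y ≤ 1 := by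
  rw [hkKernel, sq_le_one_iff_abs_le_one]
  exact abs_cos_le_one _

lemma hkKernel_self (κ : ℝ) (x : X) : hkKernel κ x x = 1 := by
  simp [hkKernel, tcos, min_eq_left pi_div_two_pos.le]

@[fun_prop]
lemma continuous_hkKernel (κ : ℝ) (x : X) : Continuous (hkKernel κ x) := by
  unfold hkKernel tcos
  fun_prop

lemma hkCost_eq {κ : ℝ} (hκ : 0 < κ) (x y : X) :
    hkCost κ x y =
      if 0 < hkKernel κ x y then ENNReal.ofReal (-log (hkKernel κ x y)) else ⊤ := by
  have hd : 0 ≤ dist x y / κ := div_nonneg dist_nonneg hκ.le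
  have hlt : dist x y < κ * π / 2 ↔ dist x y / κ < π / 2 := by
    rw [div_lt_iff₀ hκ]; constructor <;> intro h <;> linarith
  unfold hkCost hkKernel tcos
  rw [abs_of_nonneg hd]
  by_cases h : dist x y / κ < π / 2
  · have hcos : 0 < cos (dist x y / κ) := cos_pos_of_mem_Ioo ⟨by linarith [pi_pos], h⟩
    rw [if_pos (hlt.mpr h), min_eq_left h.le, if_pos (by positivity), Real.log_pow]
    push_cast
    ring_nf
  · rw [if_neg (mt hlt.mp h), min_eq_right (not_lt.mp h), cos_pi_div_two]
    simp

lemma one_add_le_hkCost_add_phiEnt {κ : ℝ} (hκ : 0 < κ) (x y : X) (r : ℝ≥0∞) {u p q : ℝ}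
    (hu : 0 < u) (hp : 0 ≤ p) (hq : 0 ≤ q) (hpq : q - p = log u) :
    1 + ENNReal.ofReal p * r ≤
      r * hkCost κ x y + phiEnt r + ENNReal.ofReal q * r
        + ENNReal.ofReal (hkKernel κ x y / u) := by
  rw [hkCost_eq hκ]
  split_ifs with hk
  · rcases eq_or_ne r ⊤ with rfl | hr
    · simp [phiEnt_top]
    obtain ⟨ρ, hρ, rfl⟩ : ∃ ρ, 0 ≤ ρ ∧ r = ENNReal.ofReal ρ :=
      ⟨r.toReal, toReal_nonneg, (ofReal_toReal hr).symm⟩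
    have hlog : 0 ≤ -log (hkKernel κ x y) :=
      neg_nonneg.mpr (log_nonpos (hkKernel_nonneg κ x y) (hkKernel_le_one κ x y))
    have key := mul_add_one_le_klFun_add_exp hρ (log (hkKernel κ x y) - log u)
    rw [exp_sub, exp_log hk, exp_log hu] at key
    rw [phiEnt_of_ne_top ofReal_ne_top, toReal_ofReal hρ, ← ofReal_mul hp, ← ofReal_mul hq,
      ← ofReal_mul hρ]
    calc 1 + ENNReal.ofReal (p * ρ) = ENNReal.ofReal (1 + p * ρ) := by
          rw [ofReal_add zero_le_one (by positivity), ofReal_one]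
      _ ≤ ENNReal.ofReal (ρ * -log (hkKernel κ x y) + klFun ρ + q * ρ + hkKernel κ x y / u) :=
          ofReal_le_ofReal (by nlinarith)
      _ ≤ _ := ofReal_add_le.trans <| add_le_add
          (ofReal_add_le.trans <| add_le_add ofReal_add_le le_rfl) le_rfl
  · rcases eq_or_ne r 0 with rfl | hr
    · simp [phiEnt_of_ne_top, klFun_zero]
    · simp [ENNReal.mul_top hr]

lemma ofReal_mul_hkCost_add_phiEnt {κ : ℝ} (hκ : 0 < κ) (x y : X) {t : ℝ} (ht : 0 ≤ t) :
    ENNReal.ofReal (t * hkKernel κ x y) * hkCost κ x y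
        + phiEnt (ENNReal.ofReal (t * hkKernel κ x y)) =
      ENNReal.ofReal ((t * log t - t) * hkKernel κ x y + 1) := by
  rw [hkCost_eq hκ]
  split_ifs with hk
  · rcases ht.eq_or_lt with rfl | ht
    · simp [phiEnt_of_ne_top, klFun_zero]
    have hlog : 0 ≤ -log (hkKernel κ x y) :=
      neg_nonneg.mpr (log_nonpos (hkKernel_nonneg κ x y) (hkKernel_le_one κ x y))
    rw [phiEnt_of_ne_top ofReal_ne_top, toReal_ofReal (by positivity), ← ofReal_mul (by positivity),
      ← ofReal_add (mul_nonneg (by positivity) hlog) (klFun_nonneg (by positivity)), klFun,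
      Real.log_mul ht.ne' hk.ne']
    ring_nf
  · obtain h0 : hkKernel κ x y = 0 := le_antisymm (not_lt.mp hk) (hkKernel_nonneg κ x y)
    simp [h0, phiEnt_of_ne_top, klFun_zero]

end Kernel

section KLdiv

variable {X : Type*} [MeasurableSpace X]

lemma KLdiv_withDensity (ν : Measure X) [SigmaFinite ν] {g : X → ℝ≥0∞} (hg : Measurable g) :
    KLdiv (ν.withDensity g) ν = ∫⁻ y, phiEnt (g y) ∂ν := by
  rw [KLdiv, if_pos (withDensity_absolutelyContinuous ν g)]
  refine lintegral_congr_ae ?_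
  filter_upwards [Measure.rnDeriv_withDensity ν hg] with y hy
  rw [hy]

lemma KLdiv_smul_dirac (s : ℝ≥0∞) (x : X) :
    KLdiv (s • Measure.dirac x) (Measure.dirac x) = phiEnt s := by
  rw [← withDensity_const, KLdiv_withDensity _ measurable_const,
    lintegral_dirac' _ measurable_const]

lemma eq_map_prodMk_of_map_fst_ac_dirac [MeasurableSingletonClass X] {Y : Type*}
    [MeasurableSpace Y] {γ : Measure (X × Y)} {x : X} (h : γ.map Prod.fst ≪ Measure.dirac x) :
    γ = (γ.map Prod.snd).map (fun y => (x, y)) := by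
  have hx : ∀ᵐ p ∂γ, p.1 = x := ae_of_ae_map measurable_fst.aemeasurable <|
    h.ae_le (show ∀ᵐ z ∂Measure.dirac x, z = x by simp [ae_dirac_eq])
  calc γ = γ.map (fun p => (x, p.2)) := by
        rw [Measure.map_congr (f := fun p => (x, p.2)) (g := id)
          (by filter_upwards [hx] with p hp; simp [← hp]), Measure.map_id]
    _ = _ := by rw [Measure.map_map measurable_prodMk_left measurable_snd]; rfl

end KLdiv

section HellingerKantorovich

variable {X : Type*} [PseudoMetricSpace X] [MeasurableSpace X]

def hkObjective (κ : ℝ) (μ ν : Measure X) (γ : Measure (X × X)) : ℝ≥0∞ :=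
  (∫⁻ p, hkCost κ p.1 p.2 ∂γ) + KLdiv (γ.map Prod.fst) μ + KLdiv (γ.map Prod.snd) ν

lemma HK2_eq_iInf (κ : ℝ) (μ ν : Measure X) :
    HK2 κ μ ν = ⨅ (γ : Measure (X × X)) (_ : IsFiniteMeasure γ), hkObjective κ μ ν γ := rfl

variable [OpensMeasurableSpace X]

lemma integrable_hkKernel (κ : ℝ) (x : X) (ν : Measure X) [IsFiniteMeasure ν] :
    Integrable (hkKernel κ x) ν :=
  Integrable.of_bound (continuous_hkKernel κ x).aestronglyMeasurable 1 <| ae_of_all _ fun y => by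
    rw [norm_of_nonneg (hkKernel_nonneg κ x y)]
    exact hkKernel_le_one κ x y

lemma integral_hkKernel_le (κ : ℝ) (x : X) (ν : Measure X) [IsFiniteMeasure ν] :
    ∫ y, hkKernel κ x y ∂ν ≤ ν.real univ := by
  simpa using integral_mono (integrable_hkKernel κ x ν) (integrable_const 1) (hkKernel_le_one κ x)

lemma lintegral_ofReal_hkKernel_div (κ : ℝ) (x : X) (ν : Measure X)
    [IsFiniteMeasure ν] {u : ℝ} (hu : 0 ≤ u) :
    ∫⁻ y, ENNReal.ofReal (hkKernel κ x y / u) ∂ν =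
      ENNReal.ofReal ((∫ y, hkKernel κ x y ∂ν) / u) := by
  rw [← integral_div, ofReal_integral_eq_lintegral_ofReal ((integrable_hkKernel κ x ν).div_const u)
    (ae_of_all _ fun y => div_nonneg (hkKernel_nonneg κ x y) hu)]

lemma one_add_measure_univ_le_of_density {κ : ℝ} (hκ : 0 < κ) (x : X) (ν : Measure X)
    [IsFiniteMeasure ν] {g : X → ℝ≥0∞} (hg : Measurable g) (hgi : ∫⁻ y, g y ∂ν ≠ ⊤) {u : ℝ}
    (hu : 0 < u) :
    1 + ν univ ≤ ∫⁻ y, (g y * hkCost κ x y + phiEnt (g y)) ∂ν + phiEnt (∫⁻ y, g y ∂ν)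
      + ENNReal.ofReal ((∫ y, hkKernel κ x y ∂ν) / u + u) := by
  set s := ∫⁻ y, g y ∂ν
  -- `log u = q - p` with `p, q ≥ 0`: both Fenchel–Young bounds then hold in `ℝ≥0∞`, and the
  -- common term `(p + q) * s` cancels
  set p := max (-log u) 0
  set q := max (log u) 0
  have hpq : q - p = log u := max_zero_sub_max_neg_zero_eq_self _
  have hP : ν univ + ENNReal.ofReal p * s ≤ ∫⁻ y, (g y * hkCost κ x y + phiEnt (g y)) ∂ν
      + ENNReal.ofReal q * s + ENNReal.ofReal ((∫ y, hkKernel κ x y ∂ν) / u) :=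
    calc ν univ + ENNReal.ofReal p * s = ∫⁻ y, (1 + ENNReal.ofReal p * g y) ∂ν := by
          rw [lintegral_add_left measurable_const, lintegral_const_mul _ hg]; simp [s]
      _ ≤ ∫⁻ y, (g y * hkCost κ x y + phiEnt (g y) + ENNReal.ofReal q * g y
            + ENNReal.ofReal (hkKernel κ x y / u)) ∂ν :=
          lintegral_mono fun y => one_add_le_hkCost_add_phiEnt hκ x y (g y) hu
            (le_max_right _ _) (le_max_right _ _) hpq
      _ = _ := by
          rw [lintegral_add_right _ (by fun_prop), lintegral_add_right _ (hg.const_mul _),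
            lintegral_const_mul _ hg, lintegral_ofReal_hkKernel_div κ x ν hu.le]
  have hQ := one_add_le_phiEnt_add hgi hu (le_max_right _ _) (le_max_right _ _) hpq
  have hfin : ENNReal.ofReal p * s + ENNReal.ofReal q * s ≠ ⊤ := by finiteness
  refine ENNReal.le_of_add_le_add_right hfin ?_
  calc 1 + ν univ + (ENNReal.ofReal p * s + ENNReal.ofReal q * s)
      = (ν univ + ENNReal.ofReal p * s) + (1 + ENNReal.ofReal q * s) := by ring
    _ ≤ _ := add_le_add hP hQ
    _ = _ := by
        rw [ofReal_add (div_nonneg (integral_nonneg (hkKernel_nonneg κ x)) hu.le) hu.le]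
        ring

variable [SecondCountableTopology X]

lemma measurable_hkCost (κ : ℝ) : Measurable fun p : X × X => hkCost κ p.1 p.2 := by
  unfold hkCost
  exact Measurable.ite (measurableSet_lt (by fun_prop) measurable_const) (by fun_prop)
    measurable_const

lemma hkObjective_map_prodMk_withDensity (κ : ℝ) (x : X) (ν : Measure X) [SigmaFinite ν]
    {g : X → ℝ≥0∞} (hg : Measurable g) :
    hkObjective κ (Measure.dirac x) ν ((ν.withDensity g).map fun y => (x, y)) =
      ∫⁻ y, (g y * hkCost κ x y + phiEnt (g y)) ∂ν + phiEnt (∫⁻ y, g y ∂ν) := by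
  have hcost : Measurable fun y => hkCost κ x y :=
    (measurable_hkCost κ).comp measurable_prodMk_left
  rw [hkObjective, lintegral_map (measurable_hkCost κ) measurable_prodMk_left,
    lintegral_withDensity_eq_lintegral_mul _ hg hcost,
    Measure.map_map measurable_fst measurable_prodMk_left,
    Measure.map_map measurable_snd measurable_prodMk_left]
  simp only [Function.comp_def, Measure.map_const, Measure.map_id', withDensity_apply _
    MeasurableSet.univ, Measure.restrict_univ, KLdiv_smul_dirac, KLdiv_withDensity ν hg]
  simp only [Pi.mul_apply]
  rw [lintegral_add_left (hg.fun_mul hcost)]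
  ring

lemma hkObjective_kernel_coupling {κ : ℝ} (hκ : 0 < κ) (x : X) (ν : Measure X)
    [IsFiniteMeasure ν] {t : ℝ} (ht : 0 ≤ t) :
    hkObjective κ (Measure.dirac x) ν
        ((ν.withDensity fun y => ENNReal.ofReal (t * hkKernel κ x y)).map fun y => (x, y)) =
      ENNReal.ofReal ((t * log t - t) * (∫ y, hkKernel κ x y ∂ν) + ν.real univ
        + klFun (t * ∫ y, hkKernel κ x y ∂ν)) := by
  have hint := integrable_hkKernel κ x ν
  have hpt : ∀ y, 0 ≤ (t * log t - t) * hkKernel κ x y + 1 := fun y =>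
    mul_log_sub_mul_add_one_nonneg ht (hkKernel_nonneg κ x y) (hkKernel_le_one κ x y)
  have hta : 0 ≤ t * ∫ y, hkKernel κ x y ∂ν := mul_nonneg ht (integral_nonneg (hkKernel_nonneg κ x))
  have hint' : Integrable (fun y => (t * log t - t) * hkKernel κ x y + 1) ν :=
    (hint.const_mul _).add (integrable_const 1)
  have hdens : ∫ y, ((t * log t - t) * hkKernel κ x y + 1) ∂ν =
      (t * log t - t) * (∫ y, hkKernel κ x y ∂ν) + ν.real univ := by
    rw [integral_add (hint.const_mul _) (integrable_const 1), integral_const_mul, integral_const,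
      smul_eq_mul, mul_one]
  rw [hkObjective_map_prodMk_withDensity κ x ν (by fun_prop),
    lintegral_congr fun y => ofReal_mul_hkCost_add_phiEnt hκ x y ht,
    ← ofReal_integral_eq_lintegral_ofReal hint' (ae_of_all _ hpt),
    ← ofReal_integral_eq_lintegral_ofReal (hint.const_mul t)
      (ae_of_all _ fun y => mul_nonneg ht (hkKernel_nonneg κ x y)),
    integral_const_mul, phiEnt_of_ne_top ofReal_ne_top,
    toReal_ofReal hta, ← ofReal_add (integral_nonneg hpt) (klFun_nonneg hta), hdens]

variable [MeasurableSingletonClass X]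

lemma one_add_measure_univ_le_hkObjective {κ : ℝ} (hκ : 0 < κ) (x : X) (ν : Measure X)
    [IsFiniteMeasure ν] (γ : Measure (X × X)) [IsFiniteMeasure γ] :
    1 + ν univ ≤ hkObjective κ (Measure.dirac x) ν γ
      + ENNReal.ofReal (2 * √(∫ y, hkKernel κ x y ∂ν)) := by
  by_cases h1 : γ.map Prod.fst ≪ Measure.dirac x
  swap; · simp [hkObjective, KLdiv, h1]
  by_cases h2 : γ.map Prod.snd ≪ ν
  swap; · simp [hkObjective, KLdiv, h2]
  have hg := Measure.measurable_rnDeriv (γ.map Prod.snd) ν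
  have hσ := Measure.withDensity_rnDeriv_eq _ _ h2
  have hgi : ∫⁻ y, (γ.map Prod.snd).rnDeriv ν y ∂ν ≠ ⊤ := by
    rw [← setLIntegral_univ, ← withDensity_apply _ MeasurableSet.univ, hσ]
    exact measure_ne_top _ _
  rw [eq_map_prodMk_of_map_fst_ac_dirac h1, ← hσ, hkObjective_map_prodMk_withDensity κ x ν hg]
  exact le_add_ofReal_two_mul_sqrt (integral_nonneg (hkKernel_nonneg κ x))
    fun u hu => one_add_measure_univ_le_of_density hκ x ν hg hgi hu

theorem HK2_dirac_eq {κ : ℝ} (hκ : 0 < κ) (x : X) (ν : Measure X) [IsFiniteMeasure ν] :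
    HK2 κ (Measure.dirac x) ν =
      ENNReal.ofReal (1 + ν.real univ - 2 * √(∫ y, hkKernel κ x y ∂ν)) := by
  set a := ∫ y, hkKernel κ x y ∂ν
  have ha : 0 ≤ a := integral_nonneg (hkKernel_nonneg κ x)
  have hone : ENNReal.ofReal (1 + ν.real univ) = 1 + ν univ := by
    rw [ofReal_add zero_le_one measureReal_nonneg, ofReal_one, ofReal_measureReal]
  rw [HK2_eq_iInf]
  refine le_antisymm ?_ ?_
  · set σ := ν.withDensity fun y => ENNReal.ofReal ((√a)⁻¹ * hkKernel κ x y)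
    have : IsFiniteMeasure σ :=
      isFiniteMeasure_withDensity_ofReal ((integrable_hkKernel κ x ν).const_mul _).2
    refine iInf_le_of_le (σ.map fun y => (x, y)) (iInf_le_of_le inferInstance (le_of_eq ?_))
    rw [hkObjective_kernel_coupling hκ x ν (by positivity)]
    congr 1
    have hsa : (√a)⁻¹ * a = √a := by
      rcases ha.eq_or_lt with h | h
      · simp [← h]
      · rw [inv_mul_eq_div, Real.div_sqrt]
    rw [hsa, klFun, Real.log_inv]
    linear_combination (-log √a - 1) * hsa
  · refine le_iInf₂ fun γ _ => ?_
    rw [ofReal_sub _ (by positivity), hone, tsub_le_iff_right]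
    exact one_add_measure_univ_le_hkObjective hκ x ν γ

end HellingerKantorovich

lemma exists_nonneg_sum_smul_eq_of_not_linearIndependent {ι E : Type*} [Fintype ι]
    [AddCommGroup E] [Module ℝ E] {w : ι → E} (hw : ¬ LinearIndependent ℝ w) {c : ι → ℝ}
    (hc : ∀ j, 0 ≤ c j) :
    ∃ c' : ι → ℝ, (∀ j, 0 ≤ c' j) ∧ (∃ j, c' j = 0) ∧ ∑ j, c' j ≤ ∑ j, c j ∧
      ∑ j, c' j • w j = ∑ j, c j • w j := by
  obtain ⟨l, hl, i, hi⟩ := Fintype.not_linearIndependent_iff.mp hw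
  obtain ⟨μ, hμw, hμs, hμi⟩ : ∃ μ : ι → ℝ, ∑ j, μ j • w j = 0 ∧ 0 ≤ ∑ j, μ j ∧ μ i ≠ 0 := by
    rcases le_total 0 (∑ j, l j) with h | h
    · exact ⟨l, hl, h, hi⟩
    · exact ⟨-l, by simp [hl], by simpa using h, by simpa using hi⟩
  obtain ⟨j₁, hj₁⟩ : ∃ j, 0 < μ j := by
    by_contra! hneg
    exact hμi <| (Finset.sum_eq_zero_iff_of_nonpos fun j _ => hneg j).mp
      (le_antisymm (Finset.sum_nonpos fun j _ => hneg j) hμs) i (Finset.mem_univ i)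
  -- walk along `-μ` until the first weight hits zero
  obtain ⟨j₀, hj₀, hmin⟩ := (Finset.univ.filter fun j => 0 < μ j).exists_min_image
    (fun j => c j / μ j) ⟨j₁, by simpa using hj₁⟩
  simp only [Finset.mem_filter, Finset.mem_univ, true_and] at hj₀ hmin
  set τ := c j₀ / μ j₀
  have hτ : 0 ≤ τ := div_nonneg (hc j₀) hj₀.le
  refine ⟨fun j => c j - τ * μ j, fun j => ?_, ⟨j₀, by simp [τ, hj₀.ne']⟩, ?_, ?_⟩
  · rcases le_or_gt (μ j) 0 with h | h
    · nlinarith [hc j]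
    · have := (le_div_iff₀ h).mp (hmin j h)
      linarith
  · rw [Finset.sum_sub_distrib, ← Finset.mul_sum]
    nlinarith
  · simp only [sub_smul, Finset.sum_sub_distrib, mul_smul, ← Finset.smul_sum, hμw, smul_zero,
      sub_zero]

lemma two_mul_sqrt_le_div_sqrt_add_sqrt {a b : ℝ} (hb : 0 ≤ b) (ha : 0 < a) :
    2 * √b ≤ b / √a + √a := by
  have hsa := sqrt_pos.mpr ha
  rw [div_add' _ _ _ hsa.ne', le_div_iff₀ hsa]
  nlinarith [sq_nonneg (√b - √a), sq_sqrt hb, sq_sqrt ha.le]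

lemma eq_of_eventually_le_mul_sub_two_mul_sqrt {M S : ℝ}
    (h : ∀ᶠ t in 𝓝 1, M - 2 * S ≤ t * M - 2 * √t * S) : M = S := by
  have hmin : IsLocalMin (fun t => t * M - 2 * √t * S) 1 := by
    simpa [IsLocalMin, IsMinFilter] using h
  have hd : HasDerivAt (fun t => t * M - 2 * √t * S) (M - S) 1 := by
    refine (((hasDerivAt_id' (x := (1 : ℝ))).mul_const M).sub
      (((Real.hasDerivAt_sqrt one_ne_zero).const_mul 2).mul_const S)).congr_deriv ?_
    simp
  linarith [hmin.hasDerivAt_eq_zero hd]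

section FirstOrder

variable {n : ℕ} {m a b : Fin n → ℝ}

lemma pos_of_eventually_two_mul_sum_sqrt_le (hm : ∀ i, 0 ≤ m i) (ha : ∀ i, 0 ≤ a i)
    (hb : ∀ i, 0 ≤ b i)
    (h : ∀ᶠ ε in 𝓝[>] 0, 2 * ∑ i, m i * √(a i + ε * b i) ≤ ε + 2 * ∑ i, m i * √(a i))
    {i : Fin n} (hmi : 0 < m i) (hbi : 0 < b i) : 0 < a i := by
  refine (ha i).lt_of_ne' fun hai => ?_
  obtain ⟨ε, hε, hε0, hεb⟩ :=
    (h.and (Ioo_mem_nhdsGT (show (0 : ℝ) < 4 * m i ^ 2 * b i by positivity))).exists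
  have hterm : m i * √(ε * b i) ≤ ∑ k, (m k * √(a k + ε * b k) - m k * √(a k)) := by
    have := Finset.single_le_sum (f := fun k => m k * √(a k + ε * b k) - m k * √(a k))
      (fun k _ => sub_nonneg.2 <| mul_le_mul_of_nonneg_left
        (sqrt_le_sqrt (le_add_of_nonneg_right (mul_nonneg hε0.le (hb k)))) (hm k))
      (Finset.mem_univ i)
    simpa [hai] using this
  rw [Finset.sum_sub_distrib] at hterm
  have hsq := pow_le_pow_left₀ (by positivity) (show 2 * m i * √(ε * b i) ≤ ε by linarith) 2
  rw [mul_pow, sq_sqrt (by positivity)] at hsq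
  nlinarith

lemma sum_mul_div_sqrt_le_one_of_eventually
    (h : ∀ᶠ ε in 𝓝[>] 0, 2 * ∑ i, m i * √(a i + ε * b i) ≤ ε + 2 * ∑ i, m i * √(a i))
    (hpos : ∀ i, m i ≠ 0 → 0 < a i) : ∑ i, m i * b i / √(a i) ≤ 1 := by
  have hterm : ∀ i, HasDerivAt (fun ε => 2 * (m i * √(a i + ε * b i))) (m i * b i / √(a i)) 0 := by
    intro i
    rcases eq_or_ne (m i) 0 with hmi | hmi
    · simpa [hmi] using hasDerivAt_const (0 : ℝ) (0 : ℝ)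
    · have hai := hpos i hmi
      refine (((((hasDerivAt_id' (x := (0 : ℝ))).mul_const (b i)).const_add (a i)).sqrt
        (by simpa using hai.ne')).const_mul (m i) |>.const_mul 2).congr_deriv ?_
      have := (sqrt_pos.2 hai).ne'
      field_simp
      simp [this]
  have hslope :=
    (HasDerivAt.fun_sum fun i (_ : i ∈ Finset.univ) => hterm i).tendsto_slope_zero_right
  refine le_of_tendsto hslope ?_
  filter_upwards [h, self_mem_nhdsWithin] with ε hε hε0
  rw [smul_eq_mul, zero_add, inv_mul_le_iff₀ hε0]
  simp only [← Finset.mul_sum, zero_mul, add_zero, mul_one]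
  linarith

end FirstOrder

section BarycenterEnergy

variable {X : Type*} {n : ℕ} (m : Fin n → ℝ) (f : Fin n → X → ℝ)

def barycenterEnergy [MeasurableSpace X] (ν : Measure X) : ℝ :=
  ν.real univ - 2 * ∑ i, m i * √(∫ y, f i y ∂ν)

def atomCost {N : ℕ} (c : Fin N → ℝ) (y : Fin N → X) : ℝ :=
  ∑ j, c j - 2 * ∑ i, m i * √(∑ j, c j * f i (y j))

variable {m f}

lemma atomCost_cons {N : ℕ} (ε : ℝ) (c : Fin N → ℝ) (z : X) (y : Fin N → X) :
    atomCost m f (Fin.cons ε c) (Fin.cons z y) =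
      ε + ∑ j, c j - 2 * ∑ i, m i * √(∑ j, c j * f i (y j) + ε * f i z) := by
  simp [atomCost, Fin.sum_univ_succ, add_comm]

lemma atomCost_cons_zero {N : ℕ} (c : Fin N → ℝ) (z : X) (y : Fin N → X) :
    atomCost m f (Fin.cons 0 c) (Fin.cons z y) = atomCost m f c y := by
  rw [atomCost_cons]
  simp [atomCost]

lemma atomCost_smul {N : ℕ} {t : ℝ} (ht : 0 ≤ t) (c : Fin N → ℝ) (y : Fin N → X) :
    atomCost m f (t • c) y =
      t * ∑ j, c j - 2 * √t * ∑ i, m i * √(∑ j, c j * f i (y j)) := by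
  have hmom : ∀ i, ∑ j, (t • c) j * f i (y j) = t * ∑ j, c j * f i (y j) := by
    simp [Finset.mul_sum, mul_assoc]
  simp_rw [atomCost, hmom, sqrt_mul ht, Pi.smul_apply, smul_eq_mul, ← Finset.mul_sum,
    mul_left_comm (m _) (√t), ← Finset.mul_sum]
  ring

lemma atomCost_comp_succAbove {N : ℕ} {c : Fin (N + 1) → ℝ} {j₀ : Fin (N + 1)} (hj₀ : c j₀ = 0)
    (y : Fin (N + 1) → X) :
    atomCost m f (c ∘ j₀.succAbove) (y ∘ j₀.succAbove) = atomCost m f c y := by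
  simp [atomCost, Fin.sum_univ_succAbove _ j₀, hj₀]

lemma sub_two_mul_sqrt_le_atomCost (hm : ∀ i, 0 ≤ m i) (hm1 : ∑ i, m i = 1)
    (hf1 : ∀ i y, f i y ≤ 1) {N : ℕ} {c : Fin N → ℝ} (hc : ∀ j, 0 ≤ c j) (y : Fin N → X) :
    ∑ j, c j - 2 * √(∑ j, c j) ≤ atomCost m f c y := by
  have hle : ∑ i, m i * √(∑ j, c j * f i (y j)) ≤ ∑ i, m i * √(∑ j, c j) :=
    Finset.sum_le_sum fun i _ => mul_le_mul_of_nonneg_left (sqrt_le_sqrt <|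
      Finset.sum_le_sum fun j _ => mul_le_of_le_one_right (hc j) (hf1 i (y j))) (hm i)
  rw [← Finset.sum_mul, hm1, one_mul] at hle
  unfold atomCost
  linarith

lemma continuous_atomCost [TopologicalSpace X] (hf : ∀ i, Continuous (f i)) (N : ℕ) :
    Continuous fun p : (Fin N → ℝ) × (Fin N → X) => atomCost m f p.1 p.2 := by
  unfold atomCost
  fun_prop

lemma integral_sum_smul_dirac [TopologicalSpace X] [MeasurableSpace X] [OpensMeasurableSpace X]
    {g : X → ℝ} (hg : Continuous g) {N : ℕ} (c : Fin N → ℝ≥0) (y : Fin N → X) :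
    ∫ z, g z ∂(∑ j, (c j : ℝ≥0∞) • Measure.dirac (y j)) = ∑ j, (c j : ℝ) * g (y j) := by
  rw [integral_finsetSum_measure fun j _ =>
    (integrable_dirac' hg.stronglyMeasurable (by simp)).smul_measure coe_ne_top]
  simp [integral_dirac' _ _ hg.stronglyMeasurable, NNReal.smul_def]

lemma barycenterEnergy_sum_smul_dirac [TopologicalSpace X] [MeasurableSpace X]
    [OpensMeasurableSpace X] (hf : ∀ i, Continuous (f i)) {N : ℕ} (c : Fin N → ℝ≥0)
    (y : Fin N → X) :
    barycenterEnergy m f (∑ j, (c j : ℝ≥0∞) • Measure.dirac (y j)) =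
      atomCost m f (fun j => (c j : ℝ)) y := by
  have hmass := integral_sum_smul_dirac continuous_const c y (g := fun _ => (1 : ℝ))
  simp only [integral_const, smul_eq_mul, mul_one] at hmass
  simp only [barycenterEnergy, atomCost, hmass, integral_sum_smul_dirac (hf _)]

lemma neg_sum_le_barycenterEnergy [MeasurableSpace X] (ν : Measure X) [IsFiniteMeasure ν]
    {a : Fin n → ℝ} (hm : ∀ i, 0 ≤ m i) (hf0 : ∀ i y, 0 ≤ f i y) (hfi : ∀ i, Integrable (f i) ν)
    (ha : ∀ i, m i ≠ 0 → 0 < a i) (hcert : ∀ y, ∑ i, m i * f i y / √(a i) ≤ 1) :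
    -∑ i, m i * √(a i) ≤ barycenterEnergy m f ν := by
  have hmass : ∑ i, m i * (∫ y, f i y ∂ν) / √(a i) ≤ ν.real univ :=
    calc ∑ i, m i * (∫ y, f i y ∂ν) / √(a i) = ∫ y, ∑ i, m i * f i y / √(a i) ∂ν := by
          rw [integral_finsetSum _ fun i _ => ((hfi i).const_mul _).div_const _]
          simp [integral_div, integral_const_mul]
      _ ≤ ∫ _, 1 ∂ν := integral_mono (integrable_finsetSum _ fun i _ =>
          ((hfi i).const_mul _).div_const _) (integrable_const 1) hcert
      _ = ν.real univ := by simp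
  have hamgm : ∀ i,
      2 * (m i * √(∫ y, f i y ∂ν)) ≤ m i * (∫ y, f i y ∂ν) / √(a i) + m i * √(a i) := by
    intro i
    rcases eq_or_ne (m i) 0 with hmi | hmi
    · simp [hmi]
    · have := mul_le_mul_of_nonneg_left (two_mul_sqrt_le_div_sqrt_add_sqrt
        (integral_nonneg (μ := ν) (hf0 i)) (ha i hmi)) (hm i)
      linarith [mul_div_assoc (m i) (∫ y, f i y ∂ν) (√(a i))]
  have := Finset.sum_le_sum fun i (_ : i ∈ Finset.univ) => hamgm i
  rw [← Finset.mul_sum, Finset.sum_add_distrib] at this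
  unfold barycenterEnergy
  linarith

-- The gap between the mass bound `4` and the box `[0, 5]` leaves room to add an atom of mass
-- at most `1` or to rescale all masses by a factor at most `5 / 4`.
lemma exists_atomCost_le_of_mem_box [TopologicalSpace X] [CompactSpace X] [Nonempty X]
    (hm : ∀ i, 0 ≤ m i) (hm1 : ∑ i, m i = 1) (hf : ∀ i, Continuous (f i))
    (hf1 : ∀ i y, f i y ≤ 1) :
    ∃ (c : Fin n → ℝ) (y : Fin n → X), (∀ j, 0 ≤ c j) ∧ ∑ j, c j ≤ 4 ∧
      ∀ (c' : Fin (n + 1) → ℝ) (y' : Fin (n + 1) → X), (∀ j, c' j ∈ Icc 0 5) →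
        atomCost m f c y ≤ atomCost m f c' y' := by
  set K : Set ((Fin (n + 1) → ℝ) × (Fin (n + 1) → X)) := (univ.pi fun _ => Icc 0 5) ×ˢ univ
  have hK : ∀ p, p ∈ K ↔ ∀ j, p.1 j ∈ Icc 0 5 := by
    simp only [K, mem_prod, mem_univ_pi, mem_univ, and_true, implies_true]
  obtain ⟨⟨c, y⟩, hcK, hmin⟩ := ((isCompact_univ_pi fun _ => isCompact_Icc).prod isCompact_univ
    |>.exists_isMinOn ⟨(0, fun _ => Classical.arbitrary X), (hK _).2 fun _ => by simp⟩
      (continuous_atomCost hf (n + 1)).continuousOn)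
  have hmin' : ∀ c' y', (∀ j, c' j ∈ Icc 0 5) → atomCost m f c y ≤ atomCost m f c' y' :=
    fun c' y' h => hmin (a := (c', y')) ((hK _).2 h)
  have hc : ∀ j, c j ∈ Icc 0 5 := (hK _).1 hcK
  have hM : ∑ j, c j ≤ 4 := by
    have h0 : atomCost m f c y ≤ 0 := by
      simpa [atomCost] using hmin' 0 y fun j => by simp
    have := sub_two_mul_sqrt_le_atomCost hm hm1 hf1 (fun j => (hc j).1) y
    have hM0 : 0 ≤ ∑ j, c j := Finset.sum_nonneg fun j _ => (hc j).1
    nlinarith [sq_sqrt hM0, sqrt_nonneg (∑ j, c j)]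
  have hdep : ¬ LinearIndependent ℝ fun j i => f i (y j) := fun h => by
    simpa using h.fintype_card_le_finrank
  obtain ⟨c', hc'0, ⟨j₀, hj₀⟩, hc'M, hc'a⟩ :=
    exists_nonneg_sum_smul_eq_of_not_linearIndependent hdep fun j => (hc j).1
  have hmom : ∀ i, ∑ j, c' j * f i (y j) = ∑ j, c j * f i (y j) := fun i => by
    simpa using congrFun hc'a i
  have hc'c : atomCost m f c' y ≤ atomCost m f c y := by
    simp only [atomCost, hmom]
    linarith
  refine ⟨c' ∘ j₀.succAbove, y ∘ j₀.succAbove, fun j => hc'0 _, ?_, fun c'' y'' h => ?_⟩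
  · simpa [Fin.sum_univ_succAbove _ j₀, hj₀] using hc'M.trans hM
  · rw [atomCost_comp_succAbove hj₀]
    exact hc'c.trans (hmin' c'' y'' h)

lemma atomCost_le_barycenterEnergy_of_forall_le [TopologicalSpace X] [Nonempty X]
    [MeasurableSpace X] [OpensMeasurableSpace X] (hm : ∀ i, 0 ≤ m i) (hf : ∀ i, Continuous (f i))
    (hf0 : ∀ i y, 0 ≤ f i y) (hf1 : ∀ i y, f i y ≤ 1) (hfpos : ∀ i, ∃ y, 0 < f i y)
    {c : Fin n → ℝ} {y : Fin n → X} (hc : ∀ j, 0 ≤ c j) (hM4 : ∑ j, c j ≤ 4)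
    (hmin : ∀ (c' : Fin (n + 1) → ℝ) (y' : Fin (n + 1) → X), (∀ j, c' j ∈ Icc 0 5) →
      atomCost m f c y ≤ atomCost m f c' y')
    (ν : Measure X) [IsFiniteMeasure ν] :
    atomCost m f c y ≤ barycenterEnergy m f ν := by
  set a : Fin n → ℝ := fun i => ∑ j, c j * f i (y j)
  set S := ∑ i, m i * √(a i)
  have hcost : atomCost m f c y = ∑ j, c j - 2 * S := rfl
  have hc4 : ∀ j, c j ≤ 4 := fun j =>
    (Finset.single_le_sum (fun j _ => hc j) (Finset.mem_univ j)).trans hM4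
  have hadd : ∀ z, ∀ᶠ ε in 𝓝[>] 0, 2 * ∑ i, m i * √(a i + ε * f i z) ≤ ε + 2 * S := by
    intro z
    filter_upwards [Ioo_mem_nhdsGT one_pos] with ε hε
    have := hmin (Fin.cons ε c) (Fin.cons z y) <| Fin.forall_fin_succ.mpr
      ⟨by simp [hε.1.le, hε.2.le.trans (by norm_num : (1 : ℝ) ≤ 5)],
        fun j => by simp [hc j, (hc4 j).trans (by norm_num : (4 : ℝ) ≤ 5)]⟩
    rw [atomCost_cons] at this
    linarith
  have hscale : ∀ᶠ t in 𝓝 1, ∑ j, c j - 2 * S ≤ t * ∑ j, c j - 2 * √t * S := by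
    filter_upwards [Ioo_mem_nhds zero_lt_one (by norm_num : (1 : ℝ) < 5 / 4)] with t ht
    have := hmin (Fin.cons 0 (t • c)) (Fin.cons (Classical.arbitrary X) y) <|
      Fin.forall_fin_succ.mpr ⟨by simp, fun j => ⟨by simpa using mul_nonneg ht.1.le (hc j), by
        simpa using (mul_le_mul ht.2.le (hc4 j) (hc j) (by norm_num)).trans (by norm_num)⟩⟩
    rwa [atomCost_cons_zero, atomCost_smul ht.1.le] at this
  have ha : ∀ i, 0 ≤ a i := fun i =>
    Finset.sum_nonneg fun j _ => mul_nonneg (hc j) (hf0 i (y j))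
  have hpos : ∀ i, m i ≠ 0 → 0 < a i := fun i hmi => by
    obtain ⟨z, hz⟩ := hfpos i
    exact pos_of_eventually_two_mul_sum_sqrt_le hm ha (fun i => hf0 i z) (hadd z)
      ((hm i).lt_of_ne' hmi) hz
  have hfi : ∀ i, Integrable (f i) ν := fun i =>
    Integrable.of_bound (hf i).aestronglyMeasurable 1 <| ae_of_all _ fun z => by
      rw [norm_of_nonneg (hf0 i z)]; exact hf1 i z
  have := neg_sum_le_barycenterEnergy ν hm hf0 hfi hpos fun z =>
    sum_mul_div_sqrt_le_one_of_eventually (hadd z) hpos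
  rw [hcost, eq_of_eventually_le_mul_sub_two_mul_sqrt hscale]
  linarith

theorem exists_sum_dirac_le_barycenterEnergy [TopologicalSpace X] [CompactSpace X]
    [MeasurableSpace X] [OpensMeasurableSpace X] (hm : ∀ i, 0 ≤ m i) (hm1 : ∑ i, m i = 1)
    (hf : ∀ i, Continuous (f i)) (hf0 : ∀ i y, 0 ≤ f i y) (hf1 : ∀ i y, f i y ≤ 1)
    (hfpos : ∀ i, ∃ y, 0 < f i y) :
    ∃ (c : Fin n → ℝ≥0) (y : Fin n → X), ∀ ν : Measure X, IsFiniteMeasure ν →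
      barycenterEnergy m f (∑ j, (c j : ℝ≥0∞) • Measure.dirac (y j)) ≤
        barycenterEnergy m f ν := by
  have : Nonempty X := by
    obtain ⟨i⟩ : Nonempty (Fin n) := by
      by_contra! h
      simp [Finset.univ_eq_empty] at hm1
    exact ⟨(hfpos i).choose⟩
  obtain ⟨c, y, hc, hM4, hmin⟩ := exists_atomCost_le_of_mem_box hm hm1 hf hf1
  refine ⟨fun j => (c j).toNNReal, y, fun ν _ => ?_⟩
  rw [barycenterEnergy_sum_smul_dirac hf]
  simp only [Real.coe_toNNReal _ (hc _)]
  exact atomCost_le_barycenterEnergy_of_forall_le hm hf hf0 hf1 hfpos hc hM4 hmin ν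

end BarycenterEnergy

section DiracBarycenter

variable {X : Type*} [PseudoMetricSpace X] [MeasurableSpace X] [MeasurableSingletonClass X]

lemma JDirac_sum_smul_dirac {n : ℕ} (m : Fin n → ℝ≥0) (x : Fin n → X) (κ : ℝ)
    (ν : Measure X) :
    JDirac (∑ i, (m i : ℝ≥0∞) • Measure.dirac (x i)) κ ν =
      ∑ i, (m i : ℝ≥0∞) * HK2 κ (Measure.dirac (x i)) ν := by
  simp only [JDirac, lintegral_finsetSum_measure, lintegral_smul_measure, lintegral_dirac,
    smul_eq_mul]

variable [OpensMeasurableSpace X] [SecondCountableTopology X]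

lemma JDirac_sum_smul_dirac_eq_ofReal {κ : ℝ} (hκ : 0 < κ) {n : ℕ} {m : Fin n → ℝ≥0}
    (hm : ∑ i, m i = 1) (x : Fin n → X) (ν : Measure X) [IsFiniteMeasure ν] :
    JDirac (∑ i, (m i : ℝ≥0∞) • Measure.dirac (x i)) κ ν =
      ENNReal.ofReal (1 + barycenterEnergy (fun i => (m i : ℝ)) (fun i => hkKernel κ (x i)) ν) := by
  have hval : ∀ i, 0 ≤ 1 + ν.real univ - 2 * √(∫ y, hkKernel κ (x i) y ∂ν) := fun i => by
    have ha := integral_nonneg (f := hkKernel κ (x i)) (μ := ν) (hkKernel_nonneg κ (x i))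
    nlinarith [sq_sqrt ha, sq_nonneg (√(∫ y, hkKernel κ (x i) y ∂ν) - 1),
      integral_hkKernel_le κ (x i) ν]
  have hm' : ∑ i, (m i : ℝ) = 1 := by exact_mod_cast hm
  rw [JDirac_sum_smul_dirac]
  simp_rw [HK2_dirac_eq hκ, ← ofReal_coe_nnreal, ← ofReal_mul (NNReal.coe_nonneg _)]
  rw [← ofReal_sum_of_nonneg fun i _ => mul_nonneg (m i).coe_nonneg (hval i)]
  congr 1
  simp only [barycenterEnergy, mul_sub, mul_add, mul_one, Finset.sum_sub_distrib,
    Finset.sum_add_distrib, ← Finset.sum_mul, hm', Finset.mul_sum]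
  ring_nf

end DiracBarycenter

theorem hk_dirac_discrete_barycenter_general {d : ℕ} (Ω : Set (Ed d)) (hΩ₁ : IsCompact Ω)
    (n : ℕ) (m : Fin n → ℝ≥0) (hm : ∑ i, m i = 1) (x : Fin n → ↥Ω)
    (ρ : Measure ↥Ω) (hρ : ρ = ∑ i, (m i : ℝ≥0∞) • Measure.dirac (x i))
    (κ : ℝ) (hκ : 0 < κ) :
    ∃ k : ℕ, 0 < k ∧ k ≤ n ∧
      ∃ (mt : Fin k → ℝ≥0) (xt : Fin k → ↥Ω),
        PrimalMin ρ κ (∑ i, (mt i : ℝ≥0∞) • Measure.dirac (xt i)) := by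
  have hn : 0 < n := Nat.pos_of_ne_zero (by rintro rfl; simp at hm)
  have : CompactSpace Ω := isCompact_iff_compactSpace.mp hΩ₁
  obtain ⟨c, y, hmin⟩ := exists_sum_dirac_le_barycenterEnergy (f := fun i => hkKernel κ (x i))
    (fun i => (m i).coe_nonneg) (by exact_mod_cast hm) (fun i => continuous_hkKernel κ (x i))
    (fun i => hkKernel_nonneg κ (x i)) (fun i => hkKernel_le_one κ (x i))
    (fun i => ⟨x i, by rw [hkKernel_self]; exact one_pos⟩)
  have : IsFiniteMeasure (∑ j, (c j : ℝ≥0∞) • Measure.dirac (y j)) := by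
    simp_rw [← ENNReal.smul_def]; infer_instance
  refine ⟨n, hn, le_rfl, c, y, this, fun ν _ => ?_⟩
  rw [hρ, JDirac_sum_smul_dirac_eq_ofReal hκ hm, JDirac_sum_smul_dirac_eq_ofReal hκ hm]
  exact ofReal_le_ofReal (by linarith [hmin ν ‹_›])

/-- Discrete barycenters exist for a finite number of Dirac input measures. -/
theorem hk_dirac_discrete_barycenter {d : ℕ} (Ω : Set (Ed d)) (hΩ₁ : IsCompact Ω)
    (hΩ₂ : Convex ℝ Ω) (hΩ₃ : (interior Ω).Nonempty)
    (n : ℕ) (m : Fin n → ℝ≥0) (hm : ∑ i, m i = 1) (x : Fin n → ↥Ω)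
    (ρ : Measure ↥Ω) (hρ : ρ = ∑ i, (m i : ℝ≥0∞) • Measure.dirac (x i))
    (κ : ℝ) (hκ : 0 < κ) :
    ∃ k : ℕ, 0 < k ∧ k ≤ n ∧
      ∃ (mt : Fin k → ℝ≥0) (xt : Fin k → ↥Ω),
        PrimalMin ρ κ (∑ i, (mt i : ℝ≥0∞) • Measure.dirac (xt i)) :=
  hk_dirac_discrete_barycenter_general Ω hΩ₁ n m hm x ρ hρ κ hκ
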